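/- arXiv:2308.02059 — 2 statements merged into one kernel-verified Lean document; each statement's English description precedes it below -/
import Mathlib

section
/- For d ≥ 1, the number v_d(n) of d-restricted directed column-convex polyominoes of area n, whose generating function is V_d(x) = (1−2x+2x²−x^{d+1})/((1−x)(1−2x+x²−x^{d+1})), satisfies v_d(n) = ∑_{k=0}^{⌊(n+d−2)/d⌋} C(n−(d−1)(k−1), 2k) for all n ≥ 1. -/
/-!
Write `a = d - 1` and `S_r(x) = ∑ₙ ∑ₖ C(n - a k, 2k + r) xⁿ`. Pascal's rule gives
`(1 - x) S_{r+1} = x S_r`, and splitting off the `k = 0` term gives `S_0 = 1/(1 - x) + x^a S_2`.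
Eliminating `S_0` and `S_1` yields `(1 - x) ((1 - x)² - x^{d+1}) S_2 = x²`, hence
`V_d = 1/(1 - x) + S_2`; the `k`-th term of the claimed sum is the `(k - 1)`-th term of `[xⁿ] S_2`.
-/

open PowerSeries

/-- Terms with `a * k > n` are `C(0, 2k + r) = 0`, so the truncated subtraction is harmless. -/
def skewChooseSum (a r n : ℕ) : ℕ :=
  ∑ k ∈ Finset.range (n + 1), (n - a * k).choose (2 * k + r)

theorem Nat.choose_succ_sub_succ {m b t : ℕ} (h : b ≤ m ∨ 0 < t) :
    (m + 1 - b).choose (t + 1) = (m - b).choose (t + 1) + (m - b).choose t := by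
  rcases le_or_gt b m with hbm | hmb
  · rw [Nat.sub_add_comm hbm, Nat.choose_succ_succ', add_comm]
  · obtain ⟨t, rfl⟩ := Nat.exists_eq_add_of_lt (h.resolve_left hmb.not_ge)
    simp [Nat.sub_eq_zero_of_le hmb, Nat.sub_eq_zero_of_le hmb.le]

namespace skewChooseSum

open Finset

theorem eq_sum_range {a r n N : ℕ} (hN : ∀ k ≥ N, n - a * k < 2 * k + r) :
    skewChooseSum a r n = ∑ k ∈ range N, (n - a * k).choose (2 * k + r) := by
  have vanish (M : ℕ) (hle : min N (n + 1) ≤ M) :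
      ∑ k ∈ range M, (n - a * k).choose (2 * k + r) =
        ∑ k ∈ range (min N (n + 1)), (n - a * k).choose (2 * k + r) := by
    refine eventually_constant_sum (fun k hk => Nat.choose_eq_zero_of_lt ?_) hle
    rcases le_total N (n + 1) with h | h
    · exact hN k (by omega)
    · have : n - a * k ≤ n := Nat.sub_le _ _
      omega
  rw [skewChooseSum, vanish _ (by omega), ← vanish N (by omega)]

theorem succ_succ (a r n : ℕ) :
    skewChooseSum a (r + 1) (n + 1) = skewChooseSum a (r + 1) n + skewChooseSum a r n := by
  rw [eq_sum_range (N := n + 1) fun k hk => by have := Nat.sub_le (n + 1) (a * k); omega,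
    skewChooseSum, skewChooseSum, ← sum_add_distrib]
  refine sum_congr rfl fun k _ => Nat.choose_succ_sub_succ (t := 2 * k + r) ?_
  rcases k.eq_zero_or_pos with rfl | hk
  · simp
  · omega

theorem zero_eq_one_add (a n : ℕ) :
    skewChooseSum a 0 n = 1 + skewChooseSum a 2 (n - a) := by
  rw [eq_sum_range (r := 2) (N := n) fun k hk => by have := Nat.sub_le (n - a) (a * k); omega,
    skewChooseSum, sum_range_succ', add_comm]
  simp only [mul_zero, Nat.sub_zero, add_zero, Nat.choose_zero_right, mul_add_one, Nat.sub_sub,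
    add_comm (a * _) a]

end skewChooseSum

section Series

variable (R : Type*) [CommRing R]

theorem one_sub_X_mul_mk_skewChooseSum_succ (a r : ℕ) :
    (1 - X) * mk (fun n => (skewChooseSum a (r + 1) n : R)) =
      X * mk (fun n => (skewChooseSum a r n : R)) := by
  ext (_ | n)
  · simp [skewChooseSum]
  · simp [sub_mul, skewChooseSum.succ_succ]

theorem mk_skewChooseSum_zero (a : ℕ) :
    mk (fun n => (skewChooseSum a 0 n : R)) =
      mk 1 + X ^ a * mk (fun n => (skewChooseSum a 2 n : R)) := by
  ext n
  rw [coeff_mk, map_add, coeff_X_pow_mul', skewChooseSum.zero_eq_one_add]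
  split_ifs with h
  · simp
  · simp [Nat.sub_eq_zero_of_le (not_le.1 h).le, skewChooseSum]

theorem mk_one_add_mk_skewChooseSum_mul (a : ℕ) :
    (mk 1 + mk (fun n => (skewChooseSum a 2 n : R))) *
        ((1 - X) * (1 - 2 * X + X ^ 2 - X ^ (a + 2))) =
      1 - 2 * X + 2 * X ^ 2 - X ^ (a + 2) := by
  have e₁ := one_sub_X_mul_mk_skewChooseSum_succ R a 0
  have e₂ := one_sub_X_mul_mk_skewChooseSum_succ R a 1
  have e₀ := mk_skewChooseSum_zero R a
  linear_combination (1 - 2 * X + 2 * X ^ 2 - X ^ (a + 2)) * mk_one_mul_one_sub_eq_one R +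
    (1 - X) ^ 2 * e₂ + (1 - X) * X * e₁ + (1 - X) * X ^ 2 * e₀

end Series

theorem sum_range_choose_eq_one_add_skewChooseSum {d : ℕ} (hd : 1 ≤ d) (n : ℕ) :
    ∑ k ∈ Finset.range ((n + d - 2) / d + 1), (n + (d - 1) - (d - 1) * k).choose (2 * k) =
      1 + skewChooseSum (d - 1) 2 n := by
  rw [Finset.sum_range_succ', add_comm, skewChooseSum.eq_sum_range (N := (n + d - 2) / d)]
  · simp only [mul_zero, Nat.sub_zero, Nat.choose_zero_right, mul_add_one, Nat.add_sub_add_right]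
  · intro k hk
    have hlt : n + d - 2 < (k + 1) * d := (Nat.div_lt_iff_lt_mul (by omega)).1 (by omega)
    have hkd : (d - 1) * k + k = d * k := by
      rw [Nat.sub_one_mul, Nat.sub_add_cancel (Nat.le_mul_of_pos_left k hd)]
    rw [add_one_mul, mul_comm k] at hlt
    omega

theorem vd_coeff_eq_general (d n : ℕ) (hd : 1 ≤ d) :
    PowerSeries.coeff (R := ℚ) n
        ((1 - 2 * X + 2 * X ^ 2 - X ^ (d + 1)) *
          ((1 - X) * (1 - 2 * X + X ^ 2 - X ^ (d + 1)))⁻¹) =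
      ∑ k ∈ Finset.range ((n + d - 2) / d + 1),
        (Nat.choose (n + (d - 1) - (d - 1) * k) (2 * k) : ℚ) := by
  obtain ⟨a, rfl⟩ : ∃ a, d = a + 1 := ⟨d - 1, by omega⟩
  have hden : constantCoeff ((1 - X) * (1 - 2 * X + X ^ 2 - X ^ (a + 2)) : ℚ⟦X⟧) ≠ 0 := by
    simp
  have hsum := sum_range_choose_eq_one_add_skewChooseSum (Nat.le_add_left 1 a) n
  rw [Nat.add_sub_cancel] at hsum
  rw [← (eq_mul_inv_iff_mul_eq hden).2 (mk_one_add_mk_skewChooseSum_mul ℚ a), map_add, coeff_mk,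
    coeff_mk, Pi.one_apply, Nat.add_sub_cancel]
  exact_mod_cast hsum.symm

/-- For `d ≥ 1` and `n ≥ 1`, the coefficient of `x^n` in the power series
`V_d(x) = (1−2x+2x²−x^{d+1})/((1−x)(1−2x+x²−x^{d+1}))` equals
`∑_{k=0}^{⌊(n+d−2)/d⌋} C(n−(d−1)(k−1), 2k)`. -/
theorem vd_coeff_eq (d n : ℕ) (hd : 1 ≤ d) (hn : 1 ≤ n) :
    PowerSeries.coeff (R := ℚ) n
        ((1 - 2 * X + 2 * X ^ 2 - X ^ (d + 1)) *
          ((1 - X) * (1 - 2 * X + X ^ 2 - X ^ (d + 1)))⁻¹) =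
      ∑ k ∈ Finset.range ((n + d - 2) / d + 1),
        (Nat.choose (n + (d - 1) - (d - 1) * k) (2 * k) : ℚ) :=
  vd_coeff_eq_general d n hd
end

section
/- For d ≥ 1, the number of d-Dyck paths of semi-length n with exactly k valleys (k ≥ 1) is at most C(n−(d−1)(k−1), 2k); in particular the total count is bounded by the sum ∑_{k=0}^{⌊(n+d−2)/d⌋} C(n−(d−1)(k−1), 2k), and a d-Dyck path of semi-length n has at most ⌊(n+d−2)/d⌋ valleys. -/
/-!
Record the `j`-th valley of a path by the numbers `(uⱼ, wⱼ)` of up- and down-steps before it;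
together with the semi-length these numbers determine the path. For a `d`-Dyck path of
semi-length `n` with `k` valleys, `w₀ ≥ 1` and the `wⱼ` increase strictly, while
`tⱼ = uⱼ - wⱼ - (d - 1) j` satisfies `t₀ ≥ 0` and increases strictly, because consecutive
valley heights `uⱼ - wⱼ` differ by at least `d`. Hence
`w₀ < w₀ + t₀ + 1 < w₁ + t₀ + 1 < w₁ + t₁ + 1 < ⋯ < w_{k-1} + t_{k-1} + 1`
is a strictly increasing sequence of `2k` integers in `[1, n - (d - 1)(k - 1)]`
(its last term is `u_{k-1} - (d - 1)(k - 1) + 1` and `u_{k-1} < n`), and the valley data can be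
read back from it. This injects the paths into the `2k`-subsets of that interval; in particular
`2k ≤ n - (d - 1)(k - 1)`, which bounds the number of valleys.
-/

/-- A Dyck word: `true` is an up-step `U`, `false` is a down-step `D`.
Every prefix has at least as many `U`'s as `D`'s, and the whole word is balanced. -/
def IsDyckWord (l : List Bool) : Prop :=
  l.count true = l.count false ∧
  ∀ k, (l.take k).count false ≤ (l.take k).count true

/-- The height (y-coordinate) of the path after the first `k` steps. -/
def pathHeight (l : List Bool) (k : ℕ) : ℤ :=
  ((l.take k).count true : ℤ) - ((l.take k).count false : ℤ)

/-- The y-coordinates of the valley vertices (occurrences of the factor `DU`),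
listed from left to right. -/
def valleyHeights (l : List Bool) : List ℤ :=
  (List.range l.length).filterMap fun i =>
    if l[i]? = some false ∧ l[i+1]? = some true
    then some (pathHeight l (i+1)) else none

/-- A `d`-Dyck word: a Dyck word whose consecutive valley heights increase by at
least `d` (this is vacuous when there is at most one valley). -/
def IsDDyck (d : ℕ) (l : List Bool) : Prop :=
  IsDyckWord l ∧
  ∀ (i : ℕ) (a b : ℤ), (valleyHeights l)[i]? = some a → (valleyHeights l)[i+1]? = some b →
    a + (d : ℤ) ≤ b

def upDownCounts (l : List Bool) : ℕ × ℕ := (l.count true, l.count false)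

theorem upDownCounts_cons (a : Bool) (l : List Bool) :
    upDownCounts (a :: l) = upDownCounts [a] + upDownCounts l := by
  cases a <;> simp [upDownCounts, add_comm]

theorem upDownCounts_eq_zero_iff {l : List Bool} : upDownCounts l = 0 ↔ l = [] := by
  have := List.count_true_add_count_false l
  simp only [upDownCounts, Prod.mk_eq_zero, ← List.length_eq_zero_iff]
  omega

theorem upDownCounts_eq_of_isDyckWord {n : ℕ} {l : List Bool} (hl : l.length = 2 * n)
    (hD : IsDyckWord l) : upDownCounts l = (n, n) := by
  have := List.count_true_add_count_false l
  have := hD.1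
  simp only [upDownCounts, Prod.mk.injEq]
  omega

def valleyData (l : List Bool) : List (ℕ × ℕ) :=
  (List.range l.length).filterMap fun i =>
    if l[i]? = some false ∧ l[i+1]? = some true then some (upDownCounts (l.take (i+1)))
    else none

theorem valleyData_cons (a : Bool) (l : List Bool) :
    valleyData (a :: l) = (if a = false ∧ l[0]? = some true then [(0, 1)] else []) ++
      (valleyData l).map (upDownCounts [a] + ·) := by
  rw [valleyData, List.length_cons, List.range_succ_eq_map, List.filterMap_cons,
    List.filterMap_map, valleyData, List.map_filterMap]
  cases a <;> by_cases h : l[0]? = some true <;> simp [h, upDownCounts, add_comm]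

theorem valleyHeights_eq_map_valleyData (l : List Bool) :
    valleyHeights l = (valleyData l).map fun p => (p.1 : ℤ) - p.2 := by
  rw [valleyHeights, valleyData, List.map_filterMap]
  refine List.filterMap_congr fun i _ => ?_
  split_ifs <;> rfl

theorem exists_eq_upDownCounts_take_of_mem_valleyData {l : List Bool} {p : ℕ × ℕ}
    (hp : p ∈ valleyData l) : ∃ i, p = upDownCounts (l.take i) := by
  simp only [valleyData, List.mem_filterMap, Option.ite_none_right_eq_some,
    Option.some.injEq] at hp
  obtain ⟨i, -, -, rfl⟩ := hp
  exact ⟨i + 1, rfl⟩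

theorem snd_le_fst_of_mem_valleyData {l : List Bool} (hD : IsDyckWord l) {p : ℕ × ℕ}
    (hp : p ∈ valleyData l) : p.2 ≤ p.1 := by
  obtain ⟨i, rfl⟩ := exists_eq_upDownCounts_take_of_mem_valleyData hp
  exact hD.2 i

theorem mem_valleyData_cons {a : Bool} {l : List Bool} {p : ℕ × ℕ} :
    p ∈ valleyData (a :: l) ↔
      (a = false ∧ l[0]? = some true ∧ p = (0, 1)) ∨
        ∃ q ∈ valleyData l, p = upDownCounts [a] + q := by
  rw [valleyData_cons]
  split_ifs with h
  · simp [h, eq_comm]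
  · simp only [List.nil_append, List.mem_map, eq_comm (a := p)]
    exact ⟨Or.inr, fun h' => h'.resolve_left fun ⟨ha, hl, _⟩ => h ⟨ha, hl⟩⟩

theorem one_le_snd_of_mem_valleyData {l : List Bool} {p : ℕ × ℕ} (hp : p ∈ valleyData l) :
    1 ≤ p.2 := by
  induction l generalizing p with
  | nil => simp [valleyData] at hp
  | cons a l ih =>
    obtain ⟨-, -, rfl⟩ | ⟨q, hq, rfl⟩ := mem_valleyData_cons.1 hp
    · exact le_rfl
    · exact (ih hq).trans (by simp)

theorem fst_lt_of_mem_valleyData {l : List Bool} {p : ℕ × ℕ} (hp : p ∈ valleyData l) :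
    p.1 < (upDownCounts l).1 := by
  induction l generalizing p with
  | nil => simp [valleyData] at hp
  | cons a l ih =>
    rw [upDownCounts_cons]
    obtain ⟨-, h, rfl⟩ | ⟨q, hq, rfl⟩ := mem_valleyData_cons.1 hp
    · exact Nat.add_pos_right _ (List.count_pos_iff.2 (List.mem_of_getElem? h))
    · exact Nat.add_lt_add_left (ih hq) _

theorem pairwise_snd_lt_valleyData (l : List Bool) :
    (valleyData l).Pairwise fun p q => p.2 < q.2 := by
  induction l with
  | nil => simp [valleyData]
  | cons a l ih =>
    rw [valleyData_cons, List.pairwise_append, List.pairwise_map]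
    refine ⟨by split_ifs <;> simp, ih.imp fun h => by simpa using h, ?_⟩
    split_ifs with h
    · simp only [List.mem_singleton, List.mem_map, forall_eq, h.1]
      rintro _ ⟨q, hq, rfl⟩
      have := one_le_snd_of_mem_valleyData hq
      show 1 < 1 + q.2
      omega
    · simp

theorem one_le_fst_of_mem_valleyData_true_cons {l : List Bool} {p : ℕ × ℕ}
    (hp : p ∈ valleyData (true :: l)) : 1 ≤ p.1 := by
  obtain ⟨⟨⟩, -⟩ | ⟨q, -, rfl⟩ := mem_valleyData_cons.1 hp
  simp [upDownCounts]

theorem exists_mem_valleyData_false_cons_fst_eq_zero {l : List Bool} (h : true ∈ l) :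
    ∃ w, (0, w) ∈ valleyData (false :: l) := by
  induction l with
  | nil => simp at h
  | cons a l ih =>
    cases a
    · obtain ⟨w, hw⟩ := ih (by simpa using h)
      exact ⟨w + 1, mem_valleyData_cons.2 (.inr ⟨_, hw, by simp [upDownCounts, add_comm]⟩)⟩
    · exact ⟨1, mem_valleyData_cons.2 (.inl ⟨rfl, rfl, rfl⟩)⟩

theorem valleyData_true_cons_ne {l l' : List Bool} (h : true ∈ l') :
    valleyData (true :: l) ≠ valleyData (false :: l') := fun hv => by
  obtain ⟨w, hw⟩ := exists_mem_valleyData_false_cons_fst_eq_zero h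
  have := one_le_fst_of_mem_valleyData_true_cons (hv ▸ hw)
  omega

-- Only a valley directly after the first step can have data `(0, 1)`.
theorem filter_valleyData_cons (a : Bool) (l : List Bool) :
    (valleyData (a :: l)).filter (· ≠ (0, 1)) = (valleyData l).map (upDownCounts [a] + ·) := by
  have hkeep : ((valleyData l).map (upDownCounts [a] + ·)).filter (· ≠ (0, 1)) =
      (valleyData l).map (upDownCounts [a] + ·) := by
    refine List.filter_eq_self.2 ?_
    simp only [List.mem_map, decide_eq_true_eq]
    rintro _ ⟨q, hq, rfl⟩
    have := one_le_snd_of_mem_valleyData hq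
    cases a <;> simp [upDownCounts, Prod.ext_iff, Nat.one_le_iff_ne_zero.1 this]
  rw [valleyData_cons, List.filter_append, hkeep]
  split_ifs <;> simp

theorem eq_of_valleyData_eq_of_upDownCounts_eq :
    ∀ {l l' : List Bool}, valleyData l = valleyData l' → upDownCounts l = upDownCounts l' →
      l = l'
  | [], l', _, hc => (upDownCounts_eq_zero_iff.1 hc.symm).symm
  | a :: l, [], _, hc => nomatch upDownCounts_eq_zero_iff.1 hc
  | a :: l, a' :: l', hv, hc => by
    rw [upDownCounts_cons a l, upDownCounts_cons a' l'] at hc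
    have hcount := congrArg Prod.fst hc
    obtain rfl : a = a' := by
      cases a <;> cases a'
      · rfl
      · change 0 + l.count true = 1 + l'.count true at hcount
        exact absurd hv.symm (valleyData_true_cons_ne (List.count_pos_iff.1 (by omega)))
      · change 1 + l.count true = 0 + l'.count true at hcount
        exact absurd hv (valleyData_true_cons_ne (List.count_pos_iff.1 (by omega)))
      · rfl
    have htail : valleyData l = valleyData l' := by
      have := filter_valleyData_cons a l
      rw [hv, filter_valleyData_cons] at this
      exact (List.map_injective_iff.2 (add_right_injective _) this).symm
    rw [eq_of_valleyData_eq_of_upDownCounts_eq htail (add_left_cancel hc)]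

section Interleave

variable {α : Type*} [AddCommMonoid α]

def interleave (f g : ℕ → α) (r : ℕ) : α := f (r / 2) + g ((r + 1) / 2)

theorem interleave_two_mul (f g : ℕ → α) (j : ℕ) : interleave f g (2 * j) = f j + g j := by
  simp only [interleave]
  congr 2 <;> omega

theorem interleave_two_mul_add_one (f g : ℕ → α) (j : ℕ) :
    interleave f g (2 * j + 1) = f j + g (j + 1) := by
  simp only [interleave]
  congr 2 <;> omega

theorem strictMonoOn_interleave [PartialOrder α] [IsOrderedCancelAddMonoid α] {f g : ℕ → α}
    {k : ℕ} (hf : ∀ j, j + 1 < k → f j < f (j + 1)) (hg : ∀ j < k, g j < g (j + 1)) :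
    StrictMonoOn (interleave f g) (Set.Iio (2 * k)) := by
  refine strictMonoOn_of_lt_succ Set.ordConnected_Iio fun r _ _ hr => ?_
  simp only [Order.succ_eq_add_one, Set.mem_Iio] at hr ⊢
  obtain ⟨j, rfl | rfl⟩ := Nat.even_or_odd' r
  · rw [interleave_two_mul, interleave_two_mul_add_one]
    exact add_lt_add_right (hg j (by omega)) _
  · rw [interleave_two_mul_add_one, show 2 * j + 1 + 1 = 2 * (j + 1) by ring,
      interleave_two_mul]
    exact add_lt_add_left (hf j (by omega)) _

theorem interleave_eq_interleave [IsCancelAdd α] {f g f' g' : ℕ → α} {k : ℕ}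
    (h₀ : g 0 = g' 0) (h : ∀ r < 2 * k, interleave f g r = interleave f' g' r) :
    ∀ j < k, f j = f' j ∧ g (j + 1) = g' (j + 1) := by
  intro j hj
  have hg : g j = g' j := by
    cases j with
    | zero => exact h₀
    | succ j => exact (interleave_eq_interleave h₀ h j (by omega)).2
  have hf : f j = f' j := by
    have := h (2 * j) (by omega)
    rwa [interleave_two_mul, interleave_two_mul, hg, add_left_inj] at this
  refine ⟨hf, ?_⟩
  have := h (2 * j + 1) (by omega)
  rwa [interleave_two_mul_add_one, interleave_two_mul_add_one, hf, add_right_inj] at this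

end Interleave

theorem IsDDyck.valleyData_step {d : ℕ} {l : List Bool} (hD : IsDDyck d l) {j : ℕ}
    (hj : j + 1 < (valleyData l).length) :
    ((valleyData l)[j].1 : ℤ) - (valleyData l)[j].2 + d ≤
      (valleyData l)[j + 1].1 - (valleyData l)[j + 1].2 :=
  hD.2 j _ _
    (by simp [valleyHeights_eq_map_valleyData, List.getElem?_eq_getElem (Nat.lt_of_succ_lt hj)])
    (by simp [valleyHeights_eq_map_valleyData, List.getElem?_eq_getElem hj])

-- In the notation of the header `shiftedValleyHeight d v (j + 1) = tⱼ + 1`, and the value `0`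
-- at `0` plays the role of `t₋₁ + 1`; `valleyCode` is then the interleaved sequence.
def shiftedValleyHeight (d : ℕ) (v : List (ℕ × ℕ)) : ℕ → ℤ
  | 0 => 0
  | j + 1 => (v.getD j 0).1 - (v.getD j 0).2 - ((d : ℤ) - 1) * j + 1

def valleyCode (d : ℕ) (v : List (ℕ × ℕ)) : ℕ → ℤ :=
  interleave (fun j => (v.getD j 0).2) (shiftedValleyHeight d v)

theorem strictMonoOn_valleyCode {d : ℕ} {l : List Bool} (hD : IsDDyck d l) :
    StrictMonoOn (valleyCode d (valleyData l)) (Set.Iio (2 * (valleyData l).length)) := by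
  refine strictMonoOn_interleave (fun j hj => ?_) (fun j hj => ?_)
  · simp only [List.getD_eq_getElem _ _ hj, List.getD_eq_getElem _ _ (Nat.lt_of_succ_lt hj)]
    exact_mod_cast List.pairwise_iff_getElem.1 (pairwise_snd_lt_valleyData l) _ _ _ _
      j.lt_succ_self
  · cases j with
    | zero =>
      have := snd_le_fst_of_mem_valleyData hD.1 (List.getElem_mem hj)
      simp only [shiftedValleyHeight, List.getD_eq_getElem _ _ hj]
      push_cast
      omega
    | succ j =>
      have := hD.valleyData_step hj
      simp only [shiftedValleyHeight, List.getD_eq_getElem _ _ hj,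
        List.getD_eq_getElem _ _ (Nat.lt_of_succ_lt hj)]
      push_cast
      linarith

theorem one_le_valleyCode_zero (d : ℕ) {l : List Bool} (hl : valleyData l ≠ []) :
    1 ≤ valleyCode d (valleyData l) 0 := by
  have hk : 0 < (valleyData l).length := List.length_pos_iff.2 hl
  have := one_le_snd_of_mem_valleyData (List.getElem_mem hk)
  rw [← Nat.mul_zero 2, valleyCode, interleave_two_mul]
  simp only [shiftedValleyHeight, List.getD_eq_getElem _ _ hk]
  omega

theorem valleyCode_two_mul_add_one_le (d : ℕ) {l : List Bool} {j : ℕ}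
    (hj : j < (valleyData l).length) :
    valleyCode d (valleyData l) (2 * j + 1) ≤ (upDownCounts l).1 - ((d : ℤ) - 1) * j := by
  have := fst_lt_of_mem_valleyData (List.getElem_mem hj)
  rw [valleyCode, interleave_two_mul_add_one]
  simp only [shiftedValleyHeight, List.getD_eq_getElem _ _ hj]
  omega

theorem valleyData_eq_of_valleyCode_eq {d : ℕ} {l l' : List Bool}
    (hk : (valleyData l).length = (valleyData l').length)
    (h : ∀ r < 2 * (valleyData l).length,
      valleyCode d (valleyData l) r = valleyCode d (valleyData l') r) :
    valleyData l = valleyData l' := by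
  refine List.ext_getElem hk fun j hj hj' => ?_
  obtain ⟨hw, ht⟩ := interleave_eq_interleave (g := shiftedValleyHeight d (valleyData l))
    (g' := shiftedValleyHeight d (valleyData l')) rfl h j hj
  simp only [shiftedValleyHeight, List.getD_eq_getElem _ _ hj,
    List.getD_eq_getElem _ _ hj'] at hw ht
  exact Prod.ext (by omega) (by omega)

theorem eqOn_of_strictMonoOn_of_image_range_eq {α : Type*} [LinearOrder α] {f g : ℕ → α}
    {m : ℕ} (hf : StrictMonoOn f (Set.Iio m)) (hg : StrictMonoOn g (Set.Iio m))
    (h : (Finset.range m).image f = (Finset.range m).image g) : ∀ r < m, f r = g r := by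
  have hcard : ((Finset.range m).image f).card = m := by
    rw [Finset.card_image_of_injOn (by simpa using hf.injOn), Finset.card_range]
  have hF := Finset.orderEmbOfFin_unique hcard (f := fun i : Fin m => f i)
    (fun i => Finset.mem_image_of_mem f (Finset.mem_range.2 i.2))
    fun i j hij => hf i.2 j.2 hij
  have hG := Finset.orderEmbOfFin_unique hcard (f := fun i : Fin m => g i)
    (fun i => h ▸ Finset.mem_image_of_mem g (Finset.mem_range.2 i.2))
    fun i j hij => hg i.2 j.2 hij
  exact fun r hr => congrFun (hF.trans hG.symm) ⟨r, hr⟩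

theorem valleyCode_mem_Icc {d n : ℕ} (hd : 1 ≤ d) {l : List Bool} (hl : l.length = 2 * n)
    (hD : IsDDyck d l) {r : ℕ} (hr : r < 2 * (valleyData l).length) :
    valleyCode d (valleyData l) r ∈
      Finset.Icc (1 : ℤ) (n + (d - 1) - (d - 1) * (valleyData l).length : ℕ) := by
  set k := (valleyData l).length
  have hmono := strictMonoOn_valleyCode hD
  have hlow : 1 ≤ valleyCode d (valleyData l) r :=
    (one_le_valleyCode_zero d (List.ne_nil_of_length_pos (by omega))).trans
      (hmono.monotoneOn (Set.mem_Iio.2 (by omega)) hr (Nat.zero_le r))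
  have hup : valleyCode d (valleyData l) r ≤ n - ((d : ℤ) - 1) * (k - 1 : ℕ) := by
    have hlast := valleyCode_two_mul_add_one_le d (l := l) (j := k - 1) (by omega)
    rw [upDownCounts_eq_of_isDyckWord hl hD.1, show 2 * (k - 1) + 1 = 2 * k - 1 by omega] at hlast
    exact (hmono.monotoneOn hr (Set.mem_Iio.2 (by omega)) (by omega)).trans hlast
  have hcast : ((d : ℤ) - 1) * (k - 1 : ℕ) = ((d - 1) * k : ℕ) - (d - 1 : ℕ) := by
    push_cast [Nat.cast_sub hd, Nat.cast_sub (show 1 ≤ k by omega)]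
    ring
  rw [hcast] at hup
  have : (d - 1 : ℕ) ≤ (d - 1) * k := Nat.le_mul_of_pos_right _ (by omega)
  rw [Finset.mem_Icc]
  generalize (d - 1) * k = c at *
  omega

theorem ncard_dDyck_valleys_le_choose {d : ℕ} (hd : 1 ≤ d) (n k : ℕ) :
    {l : List Bool | l.length = 2 * n ∧ IsDDyck d l ∧ (valleyHeights l).length = k}.ncard ≤
      (n + (d - 1) - (d - 1) * k).choose (2 * k) := by
  set S := {l : List Bool | l.length = 2 * n ∧ IsDDyck d l ∧ (valleyHeights l).length = k}
  set M := n + (d - 1) - (d - 1) * k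
  have hk : ∀ l ∈ S, (valleyData l).length = k := fun l hl => by
    rw [← hl.2.2, valleyHeights_eq_map_valleyData, List.length_map]
  let code (l : List Bool) : Finset ℤ :=
    (Finset.range (2 * k)).image (valleyCode d (valleyData l))
  have hmono : ∀ l ∈ S, StrictMonoOn (valleyCode d (valleyData l)) (Set.Iio (2 * k)) :=
    fun l hl => hk l hl ▸ strictMonoOn_valleyCode hl.2.1
  have hmaps : ∀ l ∈ S, code l ∈ (Finset.Icc (1 : ℤ) M).powersetCard (2 * k) := by
    intro l hl
    rw [Finset.mem_powersetCard, Finset.card_image_of_injOn (by simpa using (hmono l hl).injOn),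
      Finset.card_range]
    refine ⟨fun x hx => ?_, rfl⟩
    obtain ⟨r, hr, rfl⟩ := Finset.mem_image.1 hx
    have := valleyCode_mem_Icc hd hl.1 hl.2.1 (r := r) (by rw [hk l hl]; simpa using hr)
    rwa [hk l hl] at this
  have hinj : Set.InjOn code S := by
    intro l hl l' hl' h
    refine eq_of_valleyData_eq_of_upDownCounts_eq ?_
      ((upDownCounts_eq_of_isDyckWord hl.1 hl.2.1.1).trans
        (upDownCounts_eq_of_isDyckWord hl'.1 hl'.2.1.1).symm)
    refine valleyData_eq_of_valleyCode_eq (d := d) (by rw [hk l hl, hk l' hl']) fun r hr => ?_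
    rw [hk l hl] at hr
    exact eqOn_of_strictMonoOn_of_image_range_eq (hmono l hl) (hmono l' hl') h r hr
  calc S.ncard ≤ ((Finset.Icc (1 : ℤ) M).powersetCard (2 * k) : Set (Finset ℤ)).ncard :=
        Set.ncard_le_ncard_of_injOn code hmaps hinj
    _ = M.choose (2 * k) := by simp

theorem le_div_of_two_mul_le_sub {d n k : ℕ} (hd : 1 ≤ d)
    (h : 2 * k ≤ n + (d - 1) - (d - 1) * k) : k ≤ (n + d - 2) / d := by
  obtain ⟨e, rfl⟩ := Nat.exists_eq_add_of_le' hd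
  rw [Nat.add_sub_cancel] at h
  rw [Nat.le_div_iff_mul_le (by omega), show k * (e + 1) = e * k + k by ring]
  rcases Nat.eq_zero_or_pos k with rfl | hk
  · simp
  generalize e * k = c at *
  omega

theorem length_valleyHeights_le {d n : ℕ} (hd : 1 ≤ d) {l : List Bool} (hl : l.length = 2 * n)
    (hD : IsDDyck d l) : (valleyHeights l).length ≤ (n + d - 2) / d := by
  set k := (valleyHeights l).length
  have hfin : {l : List Bool | l.length = 2 * n ∧ IsDDyck d l ∧
      (valleyHeights l).length = k}.Finite :=
    (List.finite_length_eq Bool (2 * n)).subset fun _ h => h.1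
  have hpos : 0 < (n + (d - 1) - (d - 1) * k).choose (2 * k) :=
    ((Set.ncard_pos hfin).2 ⟨l, hl, hD, rfl⟩).trans_le (ncard_dDyck_valleys_le_choose hd n k)
  exact le_div_of_two_mul_le_sub hd (not_lt.1 (Nat.choose_eq_zero_iff.not.1 hpos.ne'))

theorem ncard_dDyck_le_sum_choose {d : ℕ} (hd : 1 ≤ d) (n : ℕ) :
    {l : List Bool | l.length = 2 * n ∧ IsDDyck d l}.ncard ≤
      ∑ j ∈ Finset.range ((n + d - 2) / d + 1), (n + (d - 1) - (d - 1) * j).choose (2 * j) := by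
  have hcover : {l : List Bool | l.length = 2 * n ∧ IsDDyck d l} ⊆
      ⋃ j ∈ Finset.range ((n + d - 2) / d + 1),
        {l : List Bool | l.length = 2 * n ∧ IsDDyck d l ∧ (valleyHeights l).length = j} :=
    fun l ⟨hl, hD⟩ => Set.mem_biUnion
      (Finset.mem_range_succ_iff.2 (length_valleyHeights_le hd hl hD)) ⟨hl, hD, rfl⟩
  calc _ ≤ _ := Set.ncard_le_ncard hcover (Set.Finite.biUnion (Finset.finite_toSet _)
          fun j _ => (List.finite_length_eq Bool (2 * n)).subset fun _ h => h.1)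
    _ ≤ _ := Finset.set_ncard_biUnion_le _ _
    _ ≤ _ := Finset.sum_le_sum fun j _ => ncard_dDyck_valleys_le_choose hd n j

theorem dDyck_bounds_general (d n k : ℕ) (hd : 1 ≤ d) :
    Set.ncard {l : List Bool | l.length = 2 * n ∧ IsDDyck d l ∧
        (valleyHeights l).length = k} ≤
      Nat.choose (n + (d - 1) - (d - 1) * k) (2 * k) ∧
    Set.ncard {l : List Bool | l.length = 2 * n ∧ IsDDyck d l} ≤
      ∑ j ∈ Finset.range ((n + d - 2) / d + 1),
        Nat.choose (n + (d - 1) - (d - 1) * j) (2 * j) ∧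
    ∀ l : List Bool, l.length = 2 * n → IsDDyck d l →
      (valleyHeights l).length ≤ (n + d - 2) / d :=
  ⟨ncard_dDyck_valleys_le_choose hd n k, ncard_dDyck_le_sum_choose hd n,
    fun _ hl hD => length_valleyHeights_le hd hl hD⟩

/-- Upper bounds for `d`-Dyck paths: the number of `d`-Dyck paths of
semi-length `n` with exactly `k ≥ 1` valleys is at most
`C(n−(d−1)(k−1), 2k)`; the total number is at most
`∑_{k=0}^{⌊(n+d−2)/d⌋} C(n−(d−1)(k−1), 2k)`; and a `d`-Dyck path of
semi-length `n` has at most `⌊(n+d−2)/d⌋` valleys. -/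
theorem dDyck_bounds (d n k : ℕ) (hd : 1 ≤ d) (hk : 1 ≤ k) :
    Set.ncard {l : List Bool | l.length = 2 * n ∧ IsDDyck d l ∧
        (valleyHeights l).length = k} ≤
      Nat.choose (n + (d - 1) - (d - 1) * k) (2 * k) ∧
    Set.ncard {l : List Bool | l.length = 2 * n ∧ IsDDyck d l} ≤
      ∑ j ∈ Finset.range ((n + d - 2) / d + 1),
        Nat.choose (n + (d - 1) - (d - 1) * j) (2 * j) ∧
    ∀ l : List Bool, l.length = 2 * n → IsDDyck d l →
      (valleyHeights l).length ≤ (n + d - 2) / d :=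
  dDyck_bounds_general d n k hd
end
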